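/- (Discrete nonlinear Gronwall lemma) Let k > 0, N ∈ ℕ with Nk ≤ T, nonnegative real sequences (w₁ⁿ), (w₂ⁿ), (w₃ⁿ) for n = 0,…,N, nonnegative reals (αⁿ), and A ≥ 0 satisfy w₁^m + k Σ_{n=1}^m w₂ⁿ ≤ A + k Σ_{n=1}^m αⁿ w₁ⁿ + k Σ_{n=1}^{m-1} w₃ⁿ for all m = 1,…,N, with sup_n k αⁿ ≤ 1/2. Assume there exist B ≥ 0, β > 0 with k Σ_{n=1}^{m-1} w₃ⁿ ≤ B · (sup_{n≤m-1} w₁ⁿ)^β · k Σ_{n=1}^{m-1} (w₁ⁿ + w₂ⁿ) for each m. Set E := exp(2k Σ_{n=1}^N αⁿ). If 4AE ≤ (4B(T+1)E)^{-1/β}, then sup_{n=1,…,N} w₁ⁿ + k Σ_{n=1}^N w₂ⁿ ≤ 4AE. -/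

import Mathlib

/-!
Bootstrap on `uᵐ = w₁ᵐ + k ∑_{n ≤ m} w₂ⁿ`. If `uʲ ≤ 2AE` for all `j < m`, then
`sup_{n < m} w₁ⁿ ≤ 2AE` and `k ∑_{n < m} (w₁ⁿ + w₂ⁿ) ≤ 2AE (T + 1)`, so the smallness condition
bounds the nonlinear term `k ∑_{n < m} w₃ⁿ` by `A`. What is left is the linear inequality
`uᵐ ≤ 2A + k ∑_{n ≤ m} αⁿ uⁿ`; as `k αⁿ ≤ 1/2`, each step of the linear discrete Gronwall
recursion costs at most a factor `1 + 2kαⁿ ≤ exp (2kαⁿ)`, which gives `uᵐ ≤ 2AE`.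
-/

open Finset Real

lemma le_exp_two_mul_mul_of_le_add_mul {x s t : ℝ} (hx₀ : 0 ≤ x) (hx : x ≤ 1 / 2) (hs : 0 ≤ s)
    (h : t ≤ s + x * t) : t ≤ exp (2 * x) * s := by
  have hlin : t ≤ (1 + 2 * x) * s := by
    rcases le_or_gt t 0 with ht | ht
    · nlinarith
    · -- `(1 + 2x)(1 - x) = 1 + x (1 - 2x) ≥ 1`
      nlinarith [mul_nonneg (mul_nonneg hx₀ (by linarith : 0 ≤ 1 - 2 * x)) ht.le]
  exact hlin.trans (mul_le_mul_of_nonneg_right (by linarith [add_one_le_exp (2 * x)]) hs)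

theorem discrete_gronwall_of_bootstrap {N : ℕ} {k C : ℝ} {a u : ℕ → ℝ} (hC : 0 ≤ C)
    (ha₀ : ∀ n ∈ Icc 1 N, 0 ≤ k * a n) (ha : ∀ n ∈ Icc 1 N, k * a n ≤ 1 / 2)
    (h : ∀ m ∈ Icc 1 N, (∀ j ∈ Ico 1 m, u j ≤ C * exp (2 * k * ∑ n ∈ Icc 1 j, a n)) →
      u m ≤ C + k * ∑ n ∈ Icc 1 m, a n * u n) :
    ∀ m ∈ Icc 1 N, u m ≤ C * exp (2 * k * ∑ n ∈ Icc 1 m, a n) := by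
  set S : ℕ → ℝ := fun m => C + k * ∑ n ∈ Icc 1 m, a n * u n with hS
  suffices H : ∀ m ≤ N, S m ≤ C * exp (2 * k * ∑ n ∈ Icc 1 m, a n) ∧
      ∀ j ∈ Icc 1 m, u j ≤ C * exp (2 * k * ∑ n ∈ Icc 1 j, a n) from
    fun m hm => (H m (mem_Icc.1 hm).2).2 m (by simpa using (mem_Icc.1 hm).1)
  intro m
  induction m with
  | zero => simp [hS]
  | succ m ih =>
    intro hm
    obtain ⟨hSm, hprev⟩ := ih (by omega)
    have hm' : m + 1 ∈ Icc 1 N := mem_Icc.2 ⟨by omega, hm⟩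
    have hu : u (m + 1) ≤ S (m + 1) :=
      h (m + 1) hm' fun j hj => hprev j (by simp only [mem_Ico, mem_Icc] at hj ⊢; omega)
    have hsplit : S (m + 1) = S m + k * a (m + 1) * u (m + 1) := by
      simp only [hS, sum_Icc_succ_top (by omega : 1 ≤ m + 1)]
      ring
    have hstep : S (m + 1) ≤ C * exp (2 * k * ∑ n ∈ Icc 1 m, a n) + k * a (m + 1) * S (m + 1) := by
      nlinarith [mul_le_mul_of_nonneg_left hu (ha₀ _ hm')]
    have hS' : S (m + 1) ≤ C * exp (2 * k * ∑ n ∈ Icc 1 (m + 1), a n) := by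
      calc S (m + 1) ≤ exp (2 * (k * a (m + 1))) * (C * exp (2 * k * ∑ n ∈ Icc 1 m, a n)) :=
            le_exp_two_mul_mul_of_le_add_mul (ha₀ _ hm') (ha _ hm') (by positivity) hstep
        _ = C * exp (2 * k * ∑ n ∈ Icc 1 (m + 1), a n) := by
            rw [sum_Icc_succ_top (by omega : 1 ≤ m + 1), mul_add, exp_add,
              mul_assoc 2 k (a (m + 1))]
            ring
    refine ⟨hS', fun j hj => ?_⟩
    rcases (mem_Icc.1 hj).2.lt_or_eq with hjm | rfl
    · exact hprev j (mem_Icc.2 ⟨(mem_Icc.1 hj).1, by omega⟩)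
    · exact hu.trans hS'

lemma biSup_le_and_mul_sum_le_of_add_mul_sum_le {M : ℕ} {k c : ℝ} {f g : ℕ → ℝ} (hk : 0 ≤ k)
    (hc : 0 ≤ c) (hf : ∀ n ∈ Icc 1 M, 0 ≤ f n) (hg : ∀ n ∈ Icc 1 M, 0 ≤ g n)
    (h : ∀ m ∈ Icc 1 M, f m + k * ∑ n ∈ Icc 1 m, g n ≤ c) :
    (⨆ n ∈ Icc 1 M, f n) ≤ c ∧ k * ∑ n ∈ Icc 1 M, g n ≤ c := by
  constructor
  · refine Real.iSup_le (fun m => Real.iSup_le (fun hm => ?_) hc) hc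
    have : 0 ≤ k * ∑ n ∈ Icc 1 m, g n := mul_nonneg hk <| sum_nonneg fun n hn =>
      hg n (Icc_subset_Icc_right (mem_Icc.1 hm).2 hn)
    linarith [h m hm]
  · rcases M.eq_zero_or_pos with rfl | hM
    · simpa using hc
    · have hMmem : M ∈ Icc 1 M := mem_Icc.2 ⟨hM, le_rfl⟩
      linarith [h M hMmem, hf M hMmem]

lemma mul_rpow_mul_le_div_of_le_rpow {B β a c W D : ℝ} (hβ : 0 < β) (hc : 0 < c)
    (ha : a ≤ (B * c) ^ (-(1 / β))) (hW₀ : 0 ≤ W) (hW : W ≤ a) (hD : 0 ≤ D) :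
    B * W ^ β * D ≤ D / c := by
  rcases le_or_gt B 0 with hB | hB
  · have : B * W ^ β * D ≤ 0 :=
      mul_nonpos_of_nonpos_of_nonneg (mul_nonpos_of_nonpos_of_nonneg hB (by positivity)) hD
    exact this.trans (by positivity)
  have hBc : 0 < B * c := mul_pos hB hc
  have hWβ : W ^ β ≤ (B * c)⁻¹ :=
    calc W ^ β ≤ ((B * c) ^ (-(1 / β))) ^ β := rpow_le_rpow hW₀ (hW.trans ha) hβ.le
      _ = (B * c)⁻¹ := by
        rw [← rpow_mul hBc.le, show -(1 / β) * β = -1 by field_simp, rpow_neg_one]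
  calc B * W ^ β * D ≤ B * (B * c)⁻¹ * D := by gcongr
    _ = D / c := by field_simp

lemma mul_biSup_rpow_mul_sum_le {M : ℕ} {T A B β E k : ℝ} {w₁ w₂ : ℕ → ℝ} (hk : 0 ≤ k)
    (hMk : M * k ≤ T) (hA : 0 ≤ A) (hβ : 0 < β) (hE : 0 < E)
    (hw₁ : ∀ n ∈ Icc 1 M, 0 ≤ w₁ n) (hw₂ : ∀ n ∈ Icc 1 M, 0 ≤ w₂ n)
    (h : ∀ m ∈ Icc 1 M, w₁ m + k * ∑ n ∈ Icc 1 m, w₂ n ≤ 2 * A * E)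
    (hsmall : 4 * A * E ≤ (4 * B * (T + 1) * E) ^ (-(1 / β))) :
    B * (⨆ n ∈ Icc 1 M, w₁ n) ^ β * (k * ∑ n ∈ Icc 1 M, (w₁ n + w₂ n)) ≤ A := by
  have hT : 0 ≤ T := (by positivity : (0 : ℝ) ≤ M * k).trans hMk
  obtain ⟨hsup, hsum₂⟩ :=
    biSup_le_and_mul_sum_le_of_add_mul_sum_le hk (by positivity) hw₁ hw₂ h
  have hsum₁ : k * ∑ n ∈ Icc 1 M, w₁ n ≤ T * (2 * A * E) := by
    have hle : ∑ n ∈ Icc 1 M, w₁ n ≤ M * (2 * A * E) := by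
      simpa using sum_le_card_nsmul _ _ _ fun n hn =>
        (le_add_of_nonneg_right (mul_nonneg hk (sum_nonneg fun i hi =>
          hw₂ i (Icc_subset_Icc_right (mem_Icc.1 hn).2 hi)))).trans (h n hn)
    nlinarith [mul_le_mul_of_nonneg_left hle hk,
      mul_le_mul_of_nonneg_right hMk (by positivity : (0 : ℝ) ≤ 2 * A * E)]
  have hD₀ : 0 ≤ k * ∑ n ∈ Icc 1 M, (w₁ n + w₂ n) :=
    mul_nonneg hk <| sum_nonneg fun n hn => add_nonneg (hw₁ n hn) (hw₂ n hn)
  have hD : k * ∑ n ∈ Icc 1 M, (w₁ n + w₂ n) ≤ 2 * A * E * (T + 1) := by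
    rw [sum_add_distrib, mul_add]
    linarith
  have hc : 0 < 4 * (T + 1) * E := by positivity
  calc B * (⨆ n ∈ Icc 1 M, w₁ n) ^ β * (k * ∑ n ∈ Icc 1 M, (w₁ n + w₂ n))
      ≤ (k * ∑ n ∈ Icc 1 M, (w₁ n + w₂ n)) / (4 * (T + 1) * E) :=
        mul_rpow_mul_le_div_of_le_rpow hβ hc (by convert hsmall using 2; ring)
          (Real.iSup_nonneg fun n => Real.iSup_nonneg fun hn => hw₁ n hn)
          (by linarith [mul_nonneg hA hE.le]) hD₀
    _ ≤ A := by
        rw [div_le_iff₀ hc]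
        nlinarith

theorem stmt_7_general (T A B β E k : ℝ) (N : ℕ) (hk : 0 < k) (hNk : N * k ≤ T)
    (hA : 0 ≤ A) (hβ : 0 < β)
    (w₁ w₂ w₃ α : ℕ → ℝ)
    (hw₁ : ∀ n ≤ N, 0 ≤ w₁ n) (hw₂ : ∀ n ≤ N, 0 ≤ w₂ n)
    (hα : ∀ n ≤ N, 0 ≤ α n)
    (hαk : ∀ n ∈ Finset.Icc 1 N, k * α n ≤ 1 / 2)
    (hmain : ∀ m ∈ Finset.Icc 1 N,
      w₁ m + k * ∑ n ∈ Finset.Icc 1 m, w₂ n ≤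
        A + k * (∑ n ∈ Finset.Icc 1 m, α n * w₁ n) + k * ∑ n ∈ Finset.Icc 1 (m - 1), w₃ n)
    (hw₃bound : ∀ m ∈ Finset.Icc 1 N,
      k * (∑ n ∈ Finset.Icc 1 (m - 1), w₃ n) ≤
        B * (⨆ n ∈ Finset.Icc 1 (m - 1), w₁ n) ^ β *
          (k * ∑ n ∈ Finset.Icc 1 (m - 1), (w₁ n + w₂ n)))
    (hE : E = Real.exp (2 * k * ∑ n ∈ Finset.Icc 1 N, α n))
    (hsmall : 4 * A * E ≤ (4 * B * (T + 1) * E) ^ (-(1 / β))) :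
    (⨆ n ∈ Finset.Icc 1 N, w₁ n) + k * ∑ n ∈ Finset.Icc 1 N, w₂ n ≤ 4 * A * E := by
  have hE₀ : 0 < E := hE ▸ exp_pos _
  have hexp : ∀ m ≤ N, 2 * A * exp (2 * k * ∑ n ∈ Icc 1 m, α n) ≤ 2 * A * E := fun m hm => by
    rw [hE]
    gcongr
    exact fun n hn _ => hα n (mem_Icc.1 hn).2
  have hstep : ∀ m ∈ Icc 1 N,
      (∀ j ∈ Ico 1 m, w₁ j + k * ∑ n ∈ Icc 1 j, w₂ n ≤ 2 * A * exp (2 * k * ∑ n ∈ Icc 1 j, α n)) →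
      w₁ m + k * ∑ n ∈ Icc 1 m, w₂ n ≤
        2 * A + k * ∑ n ∈ Icc 1 m, α n * (w₁ n + k * ∑ i ∈ Icc 1 n, w₂ i) := by
    intro m hm hprev
    have hmN := (mem_Icc.1 hm).2
    have hnonlinear : k * ∑ n ∈ Icc 1 (m - 1), w₃ n ≤ A := (hw₃bound m hm).trans <|
      mul_biSup_rpow_mul_sum_le hk.le ((by gcongr; omega : ((m - 1 : ℕ) : ℝ) * k ≤ N * k).trans hNk)
        hA hβ hE₀ (fun n hn => hw₁ n (by simp only [mem_Icc] at hn; omega))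
        (fun n hn => hw₂ n (by simp only [mem_Icc] at hn; omega))
        (fun j hj => (hprev j (by simp only [mem_Ico, mem_Icc] at hj ⊢; omega)).trans
          (hexp j (by simp only [mem_Icc] at hj; omega))) hsmall
    have hlinear : ∑ n ∈ Icc 1 m, α n * w₁ n ≤
        ∑ n ∈ Icc 1 m, α n * (w₁ n + k * ∑ i ∈ Icc 1 n, w₂ i) := by
      gcongr with n hn
      · exact hα n ((mem_Icc.1 hn).2.trans hmN)
      · exact le_add_of_nonneg_right (mul_nonneg hk.le (sum_nonneg fun i hi =>
          hw₂ i (by simp only [mem_Icc] at hi hn; omega)))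
    nlinarith [hmain m hm, mul_le_mul_of_nonneg_left hlinear hk.le]
  have henergy : ∀ m ∈ Icc 1 N, w₁ m + k * ∑ n ∈ Icc 1 m, w₂ n ≤ 2 * A * E := fun m hm =>
    (discrete_gronwall_of_bootstrap (u := fun m => w₁ m + k * ∑ n ∈ Icc 1 m, w₂ n) (by positivity)
      (fun n hn => mul_nonneg hk.le (hα n (mem_Icc.1 hn).2)) hαk hstep m hm).trans
      (hexp m (mem_Icc.1 hm).2)
  obtain ⟨hsup, hsum⟩ := biSup_le_and_mul_sum_le_of_add_mul_sum_le hk.le (by positivity)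
    (fun n hn => hw₁ n (mem_Icc.1 hn).2) (fun n hn => hw₂ n (mem_Icc.1 hn).2) henergy
  linarith

/-- Discrete nonlinear Gronwall lemma. -/
theorem stmt_7 (T A B β E k : ℝ) (N : ℕ) (hN : 1 ≤ N) (hk : 0 < k) (hNk : N * k ≤ T)
    (hA : 0 ≤ A) (hB : 0 ≤ B) (hβ : 0 < β)
    (w₁ w₂ w₃ α : ℕ → ℝ)
    (hw₁ : ∀ n ≤ N, 0 ≤ w₁ n) (hw₂ : ∀ n ≤ N, 0 ≤ w₂ n)
    (hw₃ : ∀ n ≤ N, 0 ≤ w₃ n) (hα : ∀ n ≤ N, 0 ≤ α n)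
    (hαk : ∀ n ∈ Finset.Icc 1 N, k * α n ≤ 1 / 2)
    (hmain : ∀ m ∈ Finset.Icc 1 N,
      w₁ m + k * ∑ n ∈ Finset.Icc 1 m, w₂ n ≤
        A + k * (∑ n ∈ Finset.Icc 1 m, α n * w₁ n) + k * ∑ n ∈ Finset.Icc 1 (m - 1), w₃ n)
    (hw₃bound : ∀ m ∈ Finset.Icc 1 N,
      k * (∑ n ∈ Finset.Icc 1 (m - 1), w₃ n) ≤
        B * (⨆ n ∈ Finset.Icc 1 (m - 1), w₁ n) ^ β *
          (k * ∑ n ∈ Finset.Icc 1 (m - 1), (w₁ n + w₂ n)))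
    (hE : E = Real.exp (2 * k * ∑ n ∈ Finset.Icc 1 N, α n))
    (hsmall : 4 * A * E ≤ (4 * B * (T + 1) * E) ^ (-(1 / β))) :
    (⨆ n ∈ Finset.Icc 1 N, w₁ n) + k * ∑ n ∈ Finset.Icc 1 N, w₂ n ≤ 4 * A * E :=
  stmt_7_general T A B β E k N hk hNk hA hβ w₁ w₂ w₃ α hw₁ hw₂ hα hαk hmain hw₃bound hE hsmall
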